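/- arXiv:2403.14434 — 6 statements merged into one kernel-verified Lean document; each statement's English description precedes it below -/
import Mathlib

section
/- If a is a nonzero Liouville number, then 1/a is a Liouville number. -/
open Filter

theorem liouville_inv (a : ℝ) (ha : Liouville a) (ha0 : a ≠ 0) :
    Liouville a⁻¹ := by
  intro n
  have hA : 0 < |a| := abs_pos.mpr ha0
  obtain ⟨B, hB⟩ := exists_nat_ge (max (4 / |a|) (4 * (|a| + 1) ^ n / |a| ^ 2 + 1))
  obtain ⟨b, ⟨p, hne, hlt⟩, hbB⟩ :=
    ((ha.frequently_exists_num (n + 1)).and_eventually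
      (eventually_ge_atTop (max B 1))).exists
  have hb1 : (1 : ℕ) ≤ b := le_of_max_le_right hbB
  have hbB' : B ≤ b := le_of_max_le_left hbB
  have hb0 : (0 : ℝ) < b := by exact_mod_cast hb1
  have hb1R : (1 : ℝ) ≤ b := by exact_mod_cast hb1
  have hbR : (B : ℝ) ≤ b := by exact_mod_cast hbB'
  have hb4A : 4 / |a| ≤ (b : ℝ) := le_trans (le_trans (le_max_left _ _) hB) hbR
  have hbig : 4 * (|a| + 1) ^ n / |a| ^ 2 + 1 ≤ (b : ℝ) :=
    le_trans (le_trans (le_max_right _ _) hB) hbR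
  set r : ℝ := (p : ℝ) / b with hr
  have hbpow : (b : ℝ) ≤ (b : ℝ) ^ (n + 1) := by
    calc (b : ℝ) = (b : ℝ) ^ 1 := (pow_one _).symm
    _ ≤ (b : ℝ) ^ (n + 1) := pow_le_pow_right₀ hb1R (by omega)
  have hlt1 : |a - r| < 1 / b :=
    lt_of_lt_of_le hlt (one_div_le_one_div_of_le hb0 hbpow)
  have h1b : 1 / (b : ℝ) ≤ |a| / 4 := by
    rw [div_le_div_iff₀ hb0 (by norm_num)]
    calc (1:ℝ) * 4 = 4 / |a| * |a| := by field_simp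
    _ ≤ (b : ℝ) * |a| := mul_le_mul_of_nonneg_right hb4A hA.le
    _ = |a| * b := mul_comm _ _
  have hr_low : |a| / 2 ≤ |r| := by
    have h2 := abs_sub_abs_le_abs_sub a r
    have h3 : |a| - |r| < |a| / 4 := lt_of_le_of_lt h2 (lt_of_lt_of_le hlt1 h1b)
    linarith
  have hr0 : r ≠ 0 := by
    intro h
    rw [h, abs_zero] at hr_low
    linarith
  have hp0 : (p : ℝ) ≠ 0 := fun h => hr0 (by rw [hr, h]; simp)
  have habs_r : |r| = |(p:ℝ)| / b := by rw [hr, abs_div, abs_of_pos hb0]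
  have hp_low : 2 ≤ |(p : ℝ)| := by
    have hstep : |a| / 2 * b ≤ |(p:ℝ)| := by
      rw [habs_r] at hr_low
      calc |a| / 2 * b ≤ |(p:ℝ)| / b * b := mul_le_mul_of_nonneg_right hr_low hb0.le
      _ = |(p:ℝ)| := by field_simp
    calc (2:ℝ) = |a| / 2 * (4 / |a|) := by field_simp; ring
    _ ≤ |a| / 2 * b := mul_le_mul_of_nonneg_left hb4A (by positivity)
    _ ≤ |(p:ℝ)| := hstep
  have hp_up : |(p : ℝ)| ≤ b * (|a| + 1) := by
    have h2 : |r| ≤ |a| + 1 / b := by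
      have h4 := abs_sub_abs_le_abs_sub r a
      rw [abs_sub_comm] at hlt1
      linarith
    have h3 : |r| ≤ |a| + 1 := by
      have h5 : 1 / (b:ℝ) ≤ 1 := by rw [div_le_one hb0]; exact hb1R
      linarith
    rw [habs_r, div_le_iff₀ hb0] at h3
    linarith
  have hcast : (((if 0 ≤ p then (b : ℤ) else -(b : ℤ)) : ℤ) : ℝ) / ((|p| : ℤ) : ℝ) = (b : ℝ) / p := by
    rcases le_or_gt 0 p with h | h
    · rw [if_pos h, abs_of_nonneg h]
      push_cast; ring
    · rw [if_neg (not_le.mpr h), abs_of_neg h]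
      push_cast
      rw [neg_div_neg_eq]
  refine ⟨if 0 ≤ p then (b : ℤ) else -(b : ℤ), |p|, ?_, ?_, ?_⟩
  · have h2 : (2:ℝ) ≤ ((|p| : ℤ) : ℝ) := by push_cast; exact hp_low
    have : (2:ℤ) ≤ |p| := by exact_mod_cast h2
    omega
  · rw [hcast]
    intro heq
    apply hne
    exact inv_injective (by rw [heq, hr, inv_div])
  · rw [hcast]
    have habs_p : ((|p| : ℤ) : ℝ) = |(p:ℝ)| := by push_cast; ring
    rw [habs_p]
    have hinv : a⁻¹ - (b:ℝ)/p = (r - a) / (a * r) := by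
      rw [hr]
      field_simp
    have heq1 : |a⁻¹ - (b:ℝ)/p| = |a - r| / (|a| * |r|) := by
      rw [hinv, abs_div, abs_mul, abs_sub_comm]
    have hden : (0:ℝ) < |a| * |r| := mul_pos hA (abs_pos.mpr hr0)
    have key : |a⁻¹ - (b:ℝ)/p| < (1 / (b:ℝ)^(n+1)) / (|a| * |r|) := by
      rw [heq1]
      exact div_lt_div_of_pos_right hlt hden
    refine key.trans_le ?_
    rw [div_div]
    apply one_div_le_one_div_of_le (by positivity)
    have hkey2 : 2 * (|a|+1)^n ≤ |a|^2 * b := by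
      have heq2 : |a|^2 * (4*(|a|+1)^n/|a|^2 + 1) = 4*(|a|+1)^n + |a|^2 := by
        field_simp
      have h6 : |a|^2 * (4*(|a|+1)^n/|a|^2 + 1) ≤ |a|^2 * b :=
        mul_le_mul_of_nonneg_left hbig (by positivity)
      have h7 : (0:ℝ) ≤ (|a|+1)^n := by positivity
      nlinarith
    calc |(p:ℝ)|^n ≤ ((b:ℝ) * (|a|+1))^n := pow_le_pow_left₀ (abs_nonneg _) hp_up n
    _ = (b:ℝ)^n * (|a|+1)^n := mul_pow _ _ _
    _ ≤ (b:ℝ)^n * (|a|^2 * b / 2) := by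
        apply mul_le_mul_of_nonneg_left _ (by positivity)
        linarith [hkey2]
    _ = (b:ℝ)^(n+1) * (|a| * (|a|/2)) := by ring
    _ ≤ (b:ℝ)^(n+1) * (|a| * |r|) := by
        apply mul_le_mul_of_nonneg_left _ (by positivity)
        exact mul_le_mul_of_nonneg_left hr_low hA.le
end

section
/- Every real number can be written as the sum of two Liouville numbers. -/
open Filter

/-- `s` and its preimage under the homeomorphism `b ↦ -b + x` are both residual, hence they meet. -/
theorem exists_add_eq_of_mem_residual {G : Type*} [TopologicalSpace G] [AddGroup G]
    [IsTopologicalAddGroup G] [BaireSpace G] [Nonempty G] {s : Set G} (hs : s ∈ residual G)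
    (x : G) : ∃ b ∈ s, ∃ c ∈ s, b + c = x := by
  let reflect : G ≃ₜ G := (Homeomorph.neg G).trans (Homeomorph.addRight x)
  have hreflect : reflect ⁻¹' s ∈ residual G := by
    rw [← reflect.residual_map_eq] at hs
    exact hs
  obtain ⟨b, hb, hc⟩ := (dense_of_mem_residual (inter_mem hs hreflect)).nonempty
  exact ⟨b, hb, -b + x, hc, add_neg_cancel_left b x⟩

theorem real_eq_sum_two_liouville (x : ℝ) :
    ∃ b c : ℝ, Liouville b ∧ Liouville c ∧ x = b + c := by
  obtain ⟨b, hb, c, hc, hbc⟩ := exists_add_eq_of_mem_residual eventually_residual_liouville x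
  exact ⟨b, c, hb, hc, hbc.symm⟩
end

section
/- Let b be a Liouville number and a a real number such that a, b, 1 are linearly independent over ℚ. Then the 2×2 matrix with rows (a, b) and (0, 0) is a 2×2 Liouville matrix. -/
/-!
A rational relation `a q₀ + b q₁ = p₀` with integer coefficients is excluded by the `ℚ`-linear
independence of `a, b, 1`. Good approximations use only the column `(b, 0)`: if `p/q` is a very
good rational approximation of `b`, then `(q₀, q₁) = (0, q)` and `(p₀, p₁) = (p, 0)` do the job.
-/

open Matrix

noncomputable section

/-- Coerce an integer vector to a real vector. -/
def vecR {k : ℕ} (q : Fin k → ℤ) : Fin k → ℝ := fun i => (q i : ℝ)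

/-- A real `m × n` matrix is a Liouville matrix if `A q - p ≠ 0` for all nonzero integer
vector pairs, and for every `N` there are integer vectors `p`, `q ≠ 0` with
`‖A q - p‖ < ‖q‖ ^ (-N)` (supremum norms). -/
def IsLiouvilleMatrix {m n : ℕ} (A : Matrix (Fin m) (Fin n) ℝ) : Prop :=
  (∀ (q : Fin n → ℤ) (p : Fin m → ℤ), ¬(q = 0 ∧ p = 0) →
      A.mulVec (vecR q) ≠ vecR p) ∧
  (∀ N : ℕ, ∃ (p : Fin m → ℤ) (q : Fin n → ℤ), q ≠ 0 ∧
      ‖A.mulVec (vecR q) - vecR p‖ < 1 / ‖q‖ ^ N)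

theorem Liouville.exists_abs_mul_sub_lt {b : ℝ} (hb : Liouville b) (N : ℕ) :
    ∃ p q : ℤ, 1 < q ∧ |b * q - p| < 1 / (q : ℝ) ^ N := by
  obtain ⟨p, q, hq, -, hlt⟩ := hb (N + 1)
  have hq : (1 : ℝ) < q := by exact_mod_cast hq
  have hq₀ : (0 : ℝ) < q := by linarith
  refine ⟨p, q, by exact_mod_cast hq, ?_⟩
  calc |b * q - p| = |(b - p / q) * q| := by congr 1; field_simp
    _ = |b - p / q| * q := by rw [abs_mul, abs_of_pos hq₀]
    _ < 1 / (q : ℝ) ^ (N + 1) * q := by gcongr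
    _ = 1 / (q : ℝ) ^ N := by field_simp; ring

theorem vecR_single {k : ℕ} (j : Fin k) (x : ℤ) :
    vecR (Pi.single j x) = Pi.single j (x : ℝ) := by
  ext i
  by_cases h : i = j
  · subst h; simp [vecR]
  · simp [vecR, h]

theorem exists_norm_mulVec_sub_lt_of_col_eq_single {m n : ℕ} {A : Matrix (Fin m) (Fin n) ℝ}
    {i : Fin m} {j : Fin n} {b : ℝ} (hb : Liouville b) (hcol : A.col j = Pi.single i b)
    (N : ℕ) : ∃ (p : Fin m → ℤ) (q : Fin n → ℤ), q ≠ 0 ∧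
      ‖A *ᵥ vecR q - vecR p‖ < 1 / ‖q‖ ^ N := by
  obtain ⟨p, q, hq, hlt⟩ := hb.exists_abs_mul_sub_lt N
  refine ⟨Pi.single i p, Pi.single j q, by simp; omega, ?_⟩
  have hres : A *ᵥ vecR (Pi.single j q) - vecR (Pi.single i p) = Pi.single i (b * q - p) := by
    rw [vecR_single, vecR_single, mulVec_single, hcol, ← Pi.single_smul', ← Pi.single_sub]
    simp
  have hq : (0 : ℝ) < q := by exact_mod_cast (by omega : (0 : ℤ) < q)
  rwa [hres, Pi.norm_single, Pi.norm_single, Real.norm_eq_abs, Int.norm_eq_abs, abs_of_pos hq]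

theorem LinearIndependent.int_eq_zero_of_mul_add_mul_eq {a b : ℝ}
    (hind : LinearIndependent ℚ ![a, b, (1 : ℝ)]) {m n k : ℤ} (h : a * m + b * n = k) :
    m = 0 ∧ n = 0 ∧ k = 0 := by
  have hℤ := Fintype.linearIndependent_iff.mp (hind.restrict_scalars' ℤ) ![m, n, -k]
    (by simp [Fin.sum_univ_three, mul_comm, h])
  exact ⟨hℤ 0, hℤ 1, by simpa using hℤ 2⟩

theorem mulVec_vecR_ne_vecR {a b : ℝ} (hind : LinearIndependent ℚ ![a, b, (1 : ℝ)])
    (q p : Fin 2 → ℤ) (hqp : ¬(q = 0 ∧ p = 0)) : !![a, b; 0, 0] *ᵥ vecR q ≠ vecR p := by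
  intro heq
  have h0 : a * q 0 + b * q 1 = p 0 := by
    simpa [mulVec, dotProduct, vecR, Fin.sum_univ_two] using congrFun heq 0
  have hp1 : p 1 = 0 := by
    exact_mod_cast (by simpa [mulVec, dotProduct, vecR] using congrFun heq 1 : 0 = (p 1 : ℝ)).symm
  obtain ⟨hq0, hq1, hp0⟩ := hind.int_eq_zero_of_mul_add_mul_eq h0
  exact hqp ⟨by ext i; fin_cases i <;> simp [hq0, hq1], by ext i; fin_cases i <;> simp [hp0, hp1]⟩

theorem liouvilleMatrix_of_liouville_entry (a b : ℝ) (hb : Liouville b)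
    (hind : LinearIndependent ℚ ![a, b, (1 : ℝ)]) :
    IsLiouvilleMatrix !![a, b; 0, 0] :=
  ⟨mulVec_vecR_ne_vecR hind,
    exists_norm_mulVec_sub_lt_of_col_eq_single hb (i := 0) (j := 1)
      (by ext k; fin_cases k <;> simp)⟩
end
end

section
/- Let n ≥ 2 and suppose the block diagonal matrix A = diag(A₂, B), where A₂ is a 2×2 Liouville matrix and B is an (n-2)×(n-2) real matrix with irrationality exponent ω(B) finite, then ω(A) = max(ω(A₂), ω(B)); in particular, for a block diagonal matrix the irrationality exponent is the maximum of the irrationality exponents of the blocks. -/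
open Matrix

noncomputable section

/-- The irrationality exponent of a square real matrix, as an extended real:
the supremum of all `v > 0` such that `‖C q - p‖ < ‖q‖ ^ (-v)` has infinitely
many integer vector solutions `(p, q)` with `q ≠ 0`. -/
def irrExp {ι : Type*} [Fintype ι] (C : Matrix ι ι ℝ) : EReal :=
  sSup {w : EReal | ∃ v : ℝ, w = (v : EReal) ∧ 0 < v ∧
    {pq : (ι → ℤ) × (ι → ℤ) | pq.2 ≠ 0 ∧
      ‖C.mulVec (fun i => ((pq.2 i : ℤ) : ℝ)) - (fun i => ((pq.1 i : ℤ) : ℝ))‖ <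
        Real.rpow ‖pq.2‖ (-v)}.Infinite}

section Aux

/-- Solution set for exponent `v`. -/
def Sol {ι : Type*} [Fintype ι] (C : Matrix ι ι ℝ) (v : ℝ) : Set ((ι → ℤ) × (ι → ℤ)) :=
  {pq : (ι → ℤ) × (ι → ℤ) | pq.2 ≠ 0 ∧
      ‖C.mulVec (fun i => ((pq.2 i : ℤ) : ℝ)) - (fun i => ((pq.1 i : ℤ) : ℝ))‖ <
        Real.rpow ‖pq.2‖ (-v)}

variable {ι ι₁ ι₂ : Type*} [Fintype ι] [Fintype ι₁] [Fintype ι₂]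

lemma one_le_norm_int {q : ι → ℤ} (hq : q ≠ 0) : 1 ≤ ‖q‖ := by
  obtain ⟨i, hi⟩ := Function.ne_iff.mp hq
  refine le_trans ?_ (norm_le_pi_norm q i)
  rw [Int.norm_eq_abs]
  exact_mod_cast Int.one_le_abs hi

lemma int_vec_eq_zero {q : ι → ℤ} (h : ‖q‖ < 1) : q = 0 := by
  funext i
  have := lt_of_le_of_lt (norm_le_pi_norm q i) h
  rw [Int.norm_eq_abs] at this
  exact Int.abs_lt_one_iff.mp (by exact_mod_cast this)

lemma norm_comp_inl_le {E : Type*} [SeminormedAddGroup E] (f : ι₁ ⊕ ι₂ → E) :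
    ‖f ∘ Sum.inl‖ ≤ ‖f‖ :=
  (pi_norm_le_iff_of_nonneg (norm_nonneg f)).mpr fun i => norm_le_pi_norm f (Sum.inl i)

lemma norm_comp_inr_le {E : Type*} [SeminormedAddGroup E] (f : ι₁ ⊕ ι₂ → E) :
    ‖f ∘ Sum.inr‖ ≤ ‖f‖ :=
  (pi_norm_le_iff_of_nonneg (norm_nonneg f)).mpr fun i => norm_le_pi_norm f (Sum.inr i)

lemma norm_elim_zero_left {E : Type*} [SeminormedAddGroup E] (a : ι₁ → E) :
    ‖(Sum.elim a 0 : ι₁ ⊕ ι₂ → E)‖ = ‖a‖ := by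
  refine le_antisymm ?_ (norm_comp_inl_le (Sum.elim a 0))
  refine (pi_norm_le_iff_of_nonneg (norm_nonneg a)).mpr fun i => ?_
  cases i with
  | inl i => exact norm_le_pi_norm a i
  | inr j => simpa using norm_nonneg a

lemma norm_elim_zero_right {E : Type*} [SeminormedAddGroup E] (b : ι₂ → E) :
    ‖(Sum.elim 0 b : ι₁ ⊕ ι₂ → E)‖ = ‖b‖ := by
  refine le_antisymm ?_ (norm_comp_inr_le (Sum.elim 0 b))
  refine (pi_norm_le_iff_of_nonneg (norm_nonneg b)).mpr fun i => ?_
  cases i with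
  | inl i => simpa using norm_nonneg b
  | inr j => exact norm_le_pi_norm b j

lemma blockDiag_mulVec (A : Matrix ι₁ ι₁ ℝ) (B : Matrix ι₂ ι₂ ℝ) (x : ι₁ ⊕ ι₂ → ℝ) :
    (fromBlocks A 0 0 B).mulVec x =
      Sum.elim (A.mulVec (x ∘ Sum.inl)) (B.mulVec (x ∘ Sum.inr)) := by
  rw [fromBlocks_mulVec, zero_mulVec, zero_mulVec, add_zero, zero_add]

lemma cast_sum_split (q : ι₁ ⊕ ι₂ → ℤ) :
    (fun i => ((q i : ℤ) : ℝ)) =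
      Sum.elim (fun i => ((q (Sum.inl i) : ℤ) : ℝ)) (fun i => ((q (Sum.inr i) : ℤ) : ℝ)) := by
  funext i; cases i <;> rfl

lemma resid_split (A : Matrix ι₁ ι₁ ℝ) (B : Matrix ι₂ ι₂ ℝ) (p q : ι₁ ⊕ ι₂ → ℤ) :
    (fromBlocks A 0 0 B).mulVec (fun i => ((q i : ℤ) : ℝ)) - (fun i => ((p i : ℤ) : ℝ)) =
      Sum.elim
        (A.mulVec (fun i => ((q (Sum.inl i) : ℤ) : ℝ)) - fun i => ((p (Sum.inl i) : ℤ) : ℝ))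
        (B.mulVec (fun i => ((q (Sum.inr i) : ℤ) : ℝ)) - fun i => ((p (Sum.inr i) : ℤ) : ℝ)) := by
  rw [cast_sum_split q, blockDiag_mulVec]
  funext i
  cases i <;> simp [Pi.sub_apply]

lemma sol_blockDiag_iff (A : Matrix ι₁ ι₁ ℝ) (B : Matrix ι₂ ι₂ ℝ) {v : ℝ} (hv : 0 < v) :
    (Sol (fromBlocks A 0 0 B) v).Infinite ↔ (Sol A v).Infinite ∨ (Sol B v).Infinite := by
  constructor
  · intro hS
    set S := Sol (fromBlocks A 0 0 B) v with hSdef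
    -- basic facts about members of S
    have hfacts : ∀ pq ∈ S,
        (pq.2 ∘ Sum.inl ≠ 0 → (pq.1 ∘ Sum.inl, pq.2 ∘ Sum.inl) ∈ Sol A v) ∧
        (pq.2 ∘ Sum.inl = 0 → pq.1 ∘ Sum.inl = 0) ∧
        (pq.2 ∘ Sum.inr ≠ 0 → (pq.1 ∘ Sum.inr, pq.2 ∘ Sum.inr) ∈ Sol B v) ∧
        (pq.2 ∘ Sum.inr = 0 → pq.1 ∘ Sum.inr = 0) := by
      rintro ⟨p, q⟩ ⟨hq, hlt⟩
      have hq1 : (1 : ℝ) ≤ ‖q‖ := one_le_norm_int hq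
      have hresid := resid_split A B p q
      have hnl : ‖A.mulVec (fun i => ((q (Sum.inl i) : ℤ) : ℝ)) -
          fun i => ((p (Sum.inl i) : ℤ) : ℝ)‖ < Real.rpow ‖q‖ (-v) := by
        refine lt_of_le_of_lt ?_ hlt
        calc ‖A.mulVec (fun i => ((q (Sum.inl i) : ℤ) : ℝ)) -
            fun i => ((p (Sum.inl i) : ℤ) : ℝ)‖
            = ‖((fromBlocks A 0 0 B).mulVec (fun i => ((q i : ℤ) : ℝ)) -
                (fun i => ((p i : ℤ) : ℝ))) ∘ Sum.inl‖ := by rw [hresid]; rfl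
          _ ≤ _ := norm_comp_inl_le _
      have hnr : ‖B.mulVec (fun i => ((q (Sum.inr i) : ℤ) : ℝ)) -
          fun i => ((p (Sum.inr i) : ℤ) : ℝ)‖ < Real.rpow ‖q‖ (-v) := by
        refine lt_of_le_of_lt ?_ hlt
        calc ‖B.mulVec (fun i => ((q (Sum.inr i) : ℤ) : ℝ)) -
            fun i => ((p (Sum.inr i) : ℤ) : ℝ)‖
            = ‖((fromBlocks A 0 0 B).mulVec (fun i => ((q i : ℤ) : ℝ)) -
                (fun i => ((p i : ℤ) : ℝ))) ∘ Sum.inr‖ := by rw [hresid]; rfl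
          _ ≤ _ := norm_comp_inr_le _
      have hrpow_le_one : Real.rpow ‖q‖ (-v) ≤ 1 := by
        have := Real.rpow_le_rpow_of_nonpos one_pos hq1 (neg_nonpos.mpr hv.le)
        simpa using this
      refine ⟨fun hql => ⟨hql, ?_⟩, fun hql => ?_, fun hqr => ⟨hqr, ?_⟩, fun hqr => ?_⟩
      · refine lt_of_lt_of_le hnl ?_
        exact Real.rpow_le_rpow_of_nonpos (lt_of_lt_of_le one_pos (one_le_norm_int hql))
          (le_trans (by rfl) (norm_comp_inl_le q)) (neg_nonpos.mpr hv.le)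
      · -- q ∘ inl = 0 forces p ∘ inl = 0
        have : ‖(fun i => ((p (Sum.inl i) : ℤ) : ℝ))‖ < 1 := by
          have h0 : A.mulVec (fun i => ((q (Sum.inl i) : ℤ) : ℝ)) = 0 := by
            have : (fun i => ((q (Sum.inl i) : ℤ) : ℝ)) = 0 := by
              funext i; simpa using congrFun hql i
            rw [this, mulVec_zero]
          rw [h0, zero_sub, norm_neg] at hnl
          exact lt_of_lt_of_le hnl hrpow_le_one
        apply int_vec_eq_zero
        calc ‖p ∘ Sum.inl‖ = ‖(fun i => ((p (Sum.inl i) : ℤ) : ℝ))‖ := by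
              refine le_antisymm ?_ ?_ <;>
              · refine (pi_norm_le_iff_of_nonneg (norm_nonneg _)).mpr fun i => ?_
                · refine le_trans (le_of_eq ?_) (norm_le_pi_norm _ i)
                  simp [Int.norm_eq_abs]
          _ < 1 := this
      · refine lt_of_lt_of_le hnr ?_
        exact Real.rpow_le_rpow_of_nonpos (lt_of_lt_of_le one_pos (one_le_norm_int hqr))
          (le_trans (by rfl) (norm_comp_inr_le q)) (neg_nonpos.mpr hv.le)
      · have : ‖(fun i => ((p (Sum.inr i) : ℤ) : ℝ))‖ < 1 := by
          have h0 : B.mulVec (fun i => ((q (Sum.inr i) : ℤ) : ℝ)) = 0 := by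
            have : (fun i => ((q (Sum.inr i) : ℤ) : ℝ)) = 0 := by
              funext i; simpa using congrFun hqr i
            rw [this, mulVec_zero]
          rw [h0, zero_sub, norm_neg] at hnr
          exact lt_of_lt_of_le hnr hrpow_le_one
        apply int_vec_eq_zero
        calc ‖p ∘ Sum.inr‖ = ‖(fun i => ((p (Sum.inr i) : ℤ) : ℝ))‖ := by
              refine le_antisymm ?_ ?_ <;>
              · refine (pi_norm_le_iff_of_nonneg (norm_nonneg _)).mpr fun i => ?_
                · refine le_trans (le_of_eq ?_) (norm_le_pi_norm _ i)
                  simp [Int.norm_eq_abs]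
          _ < 1 := this
    -- split the infinite set
    set F : ((ι₁ ⊕ ι₂ → ℤ) × (ι₁ ⊕ ι₂ → ℤ)) → ((ι₁ → ℤ) × (ι₁ → ℤ)) :=
      fun pq => (pq.1 ∘ Sum.inl, pq.2 ∘ Sum.inl) with hF
    set G : ((ι₁ ⊕ ι₂ → ℤ) × (ι₁ ⊕ ι₂ → ℤ)) → ((ι₂ → ℤ) × (ι₂ → ℤ)) :=
      fun pq => (pq.1 ∘ Sum.inr, pq.2 ∘ Sum.inr) with hG
    have hinfFG : (F '' S).Infinite ∨ (G '' S).Infinite := by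
      by_contra hcon
      push_neg at hcon
      have hHinj : Set.InjOn (fun pq => (F pq, G pq)) S := by
        rintro ⟨p, q⟩ - ⟨p', q'⟩ - h
        simp only [hF, hG, Prod.mk.injEq] at h
        obtain ⟨⟨h1, h2⟩, h3, h4⟩ := h
        refine Prod.ext ?_ ?_
        · funext i
          cases i with
          | inl i => exact congrFun h1 i
          | inr i => exact congrFun h3 i
        · funext i
          cases i with
          | inl i => exact congrFun h2 i
          | inr i => exact congrFun h4 i
      have : ((fun pq => (F pq, G pq)) '' S).Infinite :=
        (Set.infinite_image_iff hHinj).mpr hS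
      refine this (Set.Finite.subset (hcon.1.prod hcon.2) ?_)
      rintro x ⟨pq, hpq, rfl⟩
      exact ⟨⟨pq, hpq, rfl⟩, ⟨pq, hpq, rfl⟩⟩
    rcases hinfFG with h | h
    · left
      have hsub : (F '' S) \ {((0 : ι₁ → ℤ), (0 : ι₁ → ℤ))} ⊆ Sol A v := by
        rintro x ⟨⟨pq, hpq, rfl⟩, hx⟩
        have hfacts' := hfacts pq hpq
        by_cases hq : pq.2 ∘ Sum.inl = 0
        · exact absurd (Prod.ext (hfacts'.2.1 hq) hq) hx
        · exact hfacts'.1 hq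
      exact (h.diff (Set.finite_singleton _)).mono hsub
    · right
      have hsub : (G '' S) \ {((0 : ι₂ → ℤ), (0 : ι₂ → ℤ))} ⊆ Sol B v := by
        rintro x ⟨⟨pq, hpq, rfl⟩, hx⟩
        have hfacts' := hfacts pq hpq
        by_cases hq : pq.2 ∘ Sum.inr = 0
        · exact absurd (Prod.ext (hfacts'.2.2.2 hq) hq) hx
        · exact hfacts'.2.2.1 hq
      exact (h.diff (Set.finite_singleton _)).mono hsub
  · rintro (h | h)
    · set j : ((ι₁ → ℤ) × (ι₁ → ℤ)) → ((ι₁ ⊕ ι₂ → ℤ) × (ι₁ ⊕ ι₂ → ℤ)) :=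
        fun x => (Sum.elim x.1 0, Sum.elim x.2 0) with hj
      have hjinj : Set.InjOn j (Sol A v) := by
        rintro ⟨p, q⟩ - ⟨p', q'⟩ - hx
        simp only [hj, Prod.mk.injEq] at hx
        refine Prod.ext ?_ ?_ <;> funext i
        · exact congrFun hx.1 (Sum.inl i)
        · exact congrFun hx.2 (Sum.inl i)
      refine ((Set.infinite_image_iff hjinj).mpr h).mono ?_
      rintro x ⟨⟨p, q⟩, ⟨hq, hlt⟩, rfl⟩
      constructor
      · intro h0
        exact hq (funext fun i => congrFun h0 (Sum.inl i))
      · have hc : (fun i => ((Sum.elim q (0 : ι₂ → ℤ) i : ℤ) : ℝ)) =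
            Sum.elim (fun i => ((q i : ℤ) : ℝ)) (0 : ι₂ → ℝ) := by
          funext i; cases i <;> simp
        have hcp : (fun i => ((Sum.elim p (0 : ι₂ → ℤ) i : ℤ) : ℝ)) =
            Sum.elim (fun i => ((p i : ℤ) : ℝ)) (0 : ι₂ → ℝ) := by
          funext i; cases i <;> simp
        simp only [hj]
        rw [hc, hcp, blockDiag_mulVec]
        have hr : Sum.elim (A.mulVec ((Sum.elim (fun i => ((q i : ℤ) : ℝ)) (0 : ι₂ → ℝ)) ∘ Sum.inl))
              (B.mulVec ((Sum.elim (fun i => ((q i : ℤ) : ℝ)) (0 : ι₂ → ℝ)) ∘ Sum.inr)) -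
              Sum.elim (fun i => ((p i : ℤ) : ℝ)) (0 : ι₂ → ℝ) =
            Sum.elim (A.mulVec (fun i => ((q i : ℤ) : ℝ)) - fun i => ((p i : ℤ) : ℝ)) (0 : ι₂ → ℝ) := by
          funext i
          cases i with
          | inl i => simp [Pi.sub_apply]
          | inr i => simp [mulVec_zero]
        rw [hr, norm_elim_zero_left]
        have hnq : ‖Sum.elim q (0 : ι₂ → ℤ)‖ = ‖q‖ := norm_elim_zero_left q
        rw [hnq]
        exact hlt
    · set j : ((ι₂ → ℤ) × (ι₂ → ℤ)) → ((ι₁ ⊕ ι₂ → ℤ) × (ι₁ ⊕ ι₂ → ℤ)) :=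
        fun x => (Sum.elim 0 x.1, Sum.elim 0 x.2) with hj
      have hjinj : Set.InjOn j (Sol B v) := by
        rintro ⟨p, q⟩ - ⟨p', q'⟩ - hx
        simp only [hj, Prod.mk.injEq] at hx
        refine Prod.ext ?_ ?_ <;> funext i
        · exact congrFun hx.1 (Sum.inr i)
        · exact congrFun hx.2 (Sum.inr i)
      refine ((Set.infinite_image_iff hjinj).mpr h).mono ?_
      rintro x ⟨⟨p, q⟩, ⟨hq, hlt⟩, rfl⟩
      constructor
      · intro h0
        exact hq (funext fun i => congrFun h0 (Sum.inr i))
      · have hc : (fun i => ((Sum.elim (0 : ι₁ → ℤ) q i : ℤ) : ℝ)) =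
            Sum.elim (0 : ι₁ → ℝ) (fun i => ((q i : ℤ) : ℝ)) := by
          funext i; cases i <;> simp
        have hcp : (fun i => ((Sum.elim (0 : ι₁ → ℤ) p i : ℤ) : ℝ)) =
            Sum.elim (0 : ι₁ → ℝ) (fun i => ((p i : ℤ) : ℝ)) := by
          funext i; cases i <;> simp
        simp only [hj]
        rw [hc, hcp, blockDiag_mulVec]
        have hr : Sum.elim (A.mulVec ((Sum.elim (0 : ι₁ → ℝ) (fun i => ((q i : ℤ) : ℝ))) ∘ Sum.inl))
              (B.mulVec ((Sum.elim (0 : ι₁ → ℝ) (fun i => ((q i : ℤ) : ℝ))) ∘ Sum.inr)) -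
              Sum.elim (0 : ι₁ → ℝ) (fun i => ((p i : ℤ) : ℝ)) =
            Sum.elim (0 : ι₁ → ℝ) (B.mulVec (fun i => ((q i : ℤ) : ℝ)) - fun i => ((p i : ℤ) : ℝ)) := by
          funext i
          cases i with
          | inl i => simp [mulVec_zero]
          | inr i => simp [Pi.sub_apply]
        rw [hr, norm_elim_zero_right]
        have hnq : ‖Sum.elim (0 : ι₁ → ℤ) q‖ = ‖q‖ := norm_elim_zero_right q
        rw [hnq]
        exact hlt

end Aux

lemma irrExp_eq_sol {ι : Type*} [Fintype ι] (C : Matrix ι ι ℝ) :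
    irrExp C = sSup {w : EReal | ∃ v : ℝ, w = (v : EReal) ∧ 0 < v ∧ (Sol C v).Infinite} := rfl

theorem irrExp_blockDiag (n : ℕ) (hn : 2 ≤ n)
    (A₂ : Matrix (Fin 2) (Fin 2) ℝ) (B : Matrix (Fin (n - 2)) (Fin (n - 2)) ℝ)
    (hA₂ : IsLiouvilleMatrix A₂) (hB : irrExp B < ⊤) :
    irrExp (Matrix.fromBlocks A₂ 0 0 B) = max (irrExp A₂) (irrExp B) := by
  rw [irrExp_eq_sol, irrExp_eq_sol, irrExp_eq_sol]
  have hset : {w : EReal | ∃ v : ℝ, w = (v : EReal) ∧ 0 < v ∧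
        (Sol (Matrix.fromBlocks A₂ 0 0 B) v).Infinite} =
      {w : EReal | ∃ v : ℝ, w = (v : EReal) ∧ 0 < v ∧ (Sol A₂ v).Infinite} ∪
      {w : EReal | ∃ v : ℝ, w = (v : EReal) ∧ 0 < v ∧ (Sol B v).Infinite} := by
    ext w
    simp only [Set.mem_setOf_eq, Set.mem_union]
    constructor
    · rintro ⟨v, rfl, hv, h⟩
      rcases (sol_blockDiag_iff A₂ B hv).mp h with h | h
      · exact Or.inl ⟨v, rfl, hv, h⟩
      · exact Or.inr ⟨v, rfl, hv, h⟩
    · rintro (⟨v, rfl, hv, h⟩ | ⟨v, rfl, hv, h⟩)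
      · exact ⟨v, rfl, hv, (sol_blockDiag_iff A₂ B hv).mpr (Or.inl h)⟩
      · exact ⟨v, rfl, hv, (sol_blockDiag_iff A₂ B hv).mpr (Or.inr h)⟩
  rw [hset, sSup_union]
end
end

section
/- Let n ≥ 2 and let (f_k) be a sequence of continuous nowhere constant functions from a nonempty open set U ⊆ ℝ^{1×n} (row vectors) to ℝ^{1×n}. Then the set of A ∈ U such that A is a 1×n Liouville matrix and f_k(A) ∈ ℒ*_{1,n} for all k is a dense G_delta subset of U, where ℒ*_{1,n} is the set of row vectors v ∉ ℚ^n such that for every N there exist p ∈ ℤ and nonzero q ∈ ℤ^n with |v·q - p| < ‖q‖_∞^{-N}. -/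
open Matrix

noncomputable section

/-- The set `ℒ*₁ₙ` of row vectors: not rational, and admitting arbitrarily good
integer approximations. -/
def LStarRow {n : ℕ} (A : Matrix (Fin 1) (Fin n) ℝ) : Prop :=
  (¬ ∀ j, ∃ r : ℚ, A 0 j = (r : ℝ)) ∧
  (∀ N : ℕ, ∃ (p : Fin 1 → ℤ) (q : Fin n → ℤ), q ≠ 0 ∧
    ‖A.mulVec (vecR q) - vecR p‖ < 1 / ‖q‖ ^ N)

/- ### Auxiliary material -/

attribute [local instance] Matrix.normedAddCommGroup Matrix.normedSpace

open Classical in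
/-- The approximation set of quality `N`. -/
def ApproxSet (n N : ℕ) : Set (Matrix (Fin 1) (Fin n) ℝ) :=
  {B | ∃ (p : Fin 1 → ℤ) (q : Fin n → ℤ), q ≠ 0 ∧
    ‖B.mulVec (vecR q) - vecR p‖ < 1 / ‖q‖ ^ N}

section Aux

variable {n : ℕ}

lemma continuous_mulVecR (v : Fin n → ℝ) :
    Continuous fun B : Matrix (Fin 1) (Fin n) ℝ => B.mulVec v :=
  continuous_id.matrix_mulVec continuous_const

lemma qpos {q : Fin n → ℤ} (hq : q ≠ 0) (N : ℕ) : (0 : ℝ) < 1 / ‖q‖ ^ N :=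
  one_div_pos.mpr (pow_pos (norm_pos_iff.mpr hq) N)

lemma approxSet_open (n N : ℕ) : IsOpen (ApproxSet n N) := by
  have : ApproxSet n N = ⋃ (p : Fin 1 → ℤ), ⋃ (q : Fin n → ℤ),
      {B : Matrix (Fin 1) (Fin n) ℝ | q ≠ 0 ∧
        ‖B.mulVec (vecR q) - vecR p‖ < 1 / ‖q‖ ^ N} := by
    ext B; simp [ApproxSet, Set.mem_iUnion]
  rw [this]
  refine isOpen_iUnion fun p => isOpen_iUnion fun q => ?_
  by_cases hq : q = 0
  · simp [hq]
  · have h2 : {B : Matrix (Fin 1) (Fin n) ℝ | q ≠ 0 ∧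
        ‖B.mulVec (vecR q) - vecR p‖ < 1 / ‖q‖ ^ N} =
        {B : Matrix (Fin 1) (Fin n) ℝ | ‖B.mulVec (vecR q) - vecR p‖ < 1 / ‖q‖ ^ N} := by
      ext B; simp [hq]
    rw [h2]
    exact isOpen_lt (((continuous_mulVecR (vecR q)).sub continuous_const).norm)
      continuous_const

/-- Perturbation of a matrix in column `j`. -/
def Pert (B : Matrix (Fin 1) (Fin n) ℝ) (j : Fin n) (t : ℝ) : Matrix (Fin 1) (Fin n) ℝ :=
  Matrix.of fun i j' => if j' = j then B i j' + t else B i j'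

lemma pert_mulVec (B : Matrix (Fin 1) (Fin n) ℝ) (j : Fin n) (t : ℝ) (v : Fin n → ℝ)
    (i : Fin 1) : (Pert B j t).mulVec v i = B.mulVec v i + t * v j := by
  simp only [Pert, Matrix.mulVec, dotProduct, Matrix.of_apply]
  have : ∀ j' : Fin n, (if j' = j then B i j' + t else B i j') * v j'
      = B i j' * v j' + if j' = j then t * v j else 0 := by
    intro j'
    by_cases h : j' = j <;> simp [h] <;> ring
  rw [Finset.sum_congr rfl fun j' _ => this j', Finset.sum_add_distrib]
  simp

lemma pert_dist (B : Matrix (Fin 1) (Fin n) ℝ) (j : Fin n) (t : ℝ) :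
    dist (Pert B j t) B ≤ |t| := by
  rw [dist_eq_norm]
  refine (norm_le_iff (abs_nonneg t)).mpr fun i j' => ?_
  by_cases h : j' = j <;>
    simp [Pert, Matrix.sub_apply, h, Real.norm_eq_abs, abs_nonneg]

lemma single_mulVec (B : Matrix (Fin 1) (Fin n) ℝ) (j : Fin n) (M : ℤ) (i : Fin 1) :
    B.mulVec (vecR fun j' => if j' = j then M else 0) i = B i j * M := by
  simp only [Matrix.mulVec, dotProduct, vecR]
  have : ∀ j' : Fin n, B i j' * ((if j' = j then M else 0 : ℤ) : ℝ)
      = if j' = j then B i j * M else 0 := by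
    intro j'
    by_cases h : j' = j <;> simp [h]
  rw [Finset.sum_congr rfl fun j' _ => this j']
  simp

/-- Dense: the approximation sets. -/
lemma approxSet_dense (hn : 1 ≤ n) (N : ℕ) : Dense (ApproxSet n N) := by
  intro B
  refine Metric.mem_closure_iff.mpr ?_
  intro ε hε
  set j0 : Fin n := ⟨0, hn⟩
  obtain ⟨r, hr⟩ := exists_rat_near (B 0 j0) hε
  set t : ℝ := (r : ℝ) - B 0 j0 with ht
  refine ⟨Pert B j0 t, ?_, ?_⟩
  · refine ⟨fun _ => r.num, fun j' => if j' = j0 then (r.den : ℤ) else 0, ?_, ?_⟩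
    · intro h
      have := congrFun h j0
      simp [r.den_nz] at this
    · have hz : (Pert B j0 t).mulVec (vecR fun j' => if j' = j0 then (r.den : ℤ) else 0)
          - vecR (fun _ => r.num) = 0 := by
        funext i
        have hi : i = 0 := Subsingleton.elim i 0
        have h1 := _root_.single_mulVec (Pert B j0 t) j0 (r.den : ℤ) i
        have h2 : Pert B j0 t i j0 = (r : ℝ) := by
          subst hi; simp [Pert, ht]
        have h3 : (r : ℝ) * (r.den : ℝ) = (r.num : ℝ) := by
          have h4 : (r : ℝ) = (r.num : ℝ) / (r.den : ℝ) := by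
            exact_mod_cast (Rat.num_div_den r).symm
          rw [h4, div_mul_cancel₀]
          exact Nat.cast_ne_zero.mpr r.den_nz
        simp [Pi.sub_apply, h1, h2, vecR, h3]
      rw [hz]
      have : (fun j' => if j' = j0 then (r.den : ℤ) else 0) ≠ 0 := by
        intro h
        have := congrFun h j0
        simp [r.den_nz] at this
      simpa using qpos this N
  · calc dist B (Pert B j0 t) = dist (Pert B j0 t) B := dist_comm _ _
      _ ≤ |t| := pert_dist B j0 t
      _ = |B 0 j0 - (r : ℝ)| := by rw [ht, abs_sub_comm]
      _ < ε := hr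

/-- Dense: complements of the rational hyperplanes. -/
lemma hyperplane_compl_dense {q : Fin n → ℤ} {p : Fin 1 → ℤ} (hqp : ¬(q = 0 ∧ p = 0)) :
    Dense {B : Matrix (Fin 1) (Fin n) ℝ | B.mulVec (vecR q) ≠ vecR p} := by
  by_cases hq : q = 0
  · have hp : p ≠ 0 := fun hp => hqp ⟨hq, hp⟩
    have : {B : Matrix (Fin 1) (Fin n) ℝ | B.mulVec (vecR q) ≠ vecR p} = Set.univ := by
      ext B
      simp only [Set.mem_setOf_eq, Set.mem_univ, iff_true]
      intro h
      apply hp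
      funext i
      have := congrFun h i
      simp [hq, vecR, Matrix.mulVec, dotProduct] at this
      exact_mod_cast this.symm
    rw [this]; exact dense_univ
  · obtain ⟨j, hj⟩ : ∃ j, q j ≠ 0 := by
      by_contra h
      push_neg at h
      exact hq (funext h)
    intro B
    refine Metric.mem_closure_iff.mpr ?_
    intro ε hε
    by_cases hB : B.mulVec (vecR q) ≠ vecR p
    · exact ⟨B, hB, by simpa using hε⟩
    · push_neg at hB
      refine ⟨Pert B j (ε / 2), ?_, ?_⟩
      · intro h
        have h0 := congrFun h 0
        rw [pert_mulVec, congrFun hB 0] at h0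
        have : (ε / 2) * (vecR q j) = 0 := by linarith [h0]
        rcases mul_eq_zero.mp this with h1 | h1
        · linarith
        · have h2 : (q j : ℝ) = 0 := h1
          exact hj (by exact_mod_cast h2)
      · calc dist B (Pert B j (ε / 2)) = dist (Pert B j (ε / 2)) B := dist_comm _ _
          _ ≤ |ε / 2| := pert_dist B j (ε / 2)
          _ < ε := by rw [abs_of_pos (by linarith)]; linarith

lemma exists_int_div_mem_Icc {a b : ℝ} (h : a < b) :
    ∃ (p : ℤ) (M : ℕ), 0 < M ∧ (p : ℝ) / M ∈ Set.Icc a b := by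
  obtain ⟨M, hM⟩ := exists_nat_gt (1 / (b - a))
  have hba : 0 < b - a := by linarith
  have h1M : 1 / (b - a) > 0 := by positivity
  have hM0 : 0 < M := by exact_mod_cast lt_trans h1M hM
  have hMR : (0 : ℝ) < M := by exact_mod_cast hM0
  have hMd : 1 < (M : ℝ) * (b - a) := by
    rw [div_lt_iff₀ hba] at hM
    linarith
  refine ⟨⌈(M : ℝ) * a⌉, M, hM0, ?_, ?_⟩
  · rw [le_div_iff₀ hMR]
    calc a * M = (M : ℝ) * a := by ring
      _ ≤ ⌈(M : ℝ) * a⌉ := Int.le_ceil _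
  · rw [div_le_iff₀ hMR]
    have : (⌈(M : ℝ) * a⌉ : ℝ) < b * M :=
      calc (⌈(M : ℝ) * a⌉ : ℝ) < (M : ℝ) * a + 1 := Int.ceil_lt_add_one _
        _ ≤ (M : ℝ) * a + (M : ℝ) * (b - a) := by linarith
        _ = b * M := by ring
    linarith

end Aux

/-- The family of open sets realizing the target set as a `Gδ`. -/
def WFam (n : ℕ) (U : Set (Matrix (Fin 1) (Fin n) ℝ))
    (f : ℕ → Matrix (Fin 1) (Fin n) ℝ → Matrix (Fin 1) (Fin n) ℝ) :
    ((Fin n → ℤ) × (Fin 1 → ℤ)) ⊕ ℕ ⊕ (ℕ × (Fin n → ℚ)) ⊕ (ℕ × ℕ) →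
      Set (Matrix (Fin 1) (Fin n) ℝ)
  | .inl (q, p) =>
      if q = 0 ∧ p = 0 then Set.univ
      else {A | A.mulVec (vecR q) ≠ vecR p}
  | .inr (.inl N) => ApproxSet n N
  | .inr (.inr (.inl (k, r))) => {A | A ∈ U ∧ f k A ≠ Matrix.of fun _ j => ((r j : ℝ))}
  | .inr (.inr (.inr (k, N))) => {A | A ∈ U ∧ f k A ∈ ApproxSet n N}

/-- Abstract Baire category argument. -/
theorem baire_helper {X : Type*} [TopologicalSpace X] [TopologicalSpace.PseudoMetrizableSpace X]
    [BaireSpace X] {U : Set X} (hU : IsOpen U) {ι : Type*} [Countable ι] (W : ι → Set X)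
    (hWo : ∀ i, IsOpen (W i)) (hWd : ∀ i, U ⊆ closure (W i)) :
    IsGδ (U ∩ ⋂ i, W i) ∧ U ⊆ closure (U ∩ ⋂ i, W i) := by
  constructor
  · exact hU.isGδ.inter (IsGδ.iInter fun i => (hWo i).isGδ)
  · have hdense : Dense (⋂ i, W i ∪ (closure U)ᶜ) := by
      refine dense_iInter_of_isOpen
        (fun i => (hWo i).union isClosed_closure.isOpen_compl) fun i x => ?_
      by_cases hx : x ∈ closure U
      · have : closure U ⊆ closure (W i) := closure_minimal (hWd i) isClosed_closure
        exact closure_mono Set.subset_union_left (this hx)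
      · exact subset_closure (Set.mem_union_right _ hx)
    have hEq : U ∩ ⋂ i, (W i ∪ (closure U)ᶜ) = U ∩ ⋂ i, W i := by
      ext x
      simp only [Set.mem_inter_iff, Set.mem_iInter, Set.mem_union, Set.mem_compl_iff]
      constructor
      · rintro ⟨hxU, h⟩
        exact ⟨hxU, fun i => (h i).resolve_right fun hc => hc (subset_closure hxU)⟩
      · rintro ⟨hxU, h⟩
        exact ⟨hxU, fun i => Or.inl (h i)⟩
    have := hdense.open_subset_closure_inter hU
    rwa [hEq] at this

theorem nowhereConstant_rowVector (n : ℕ) (hn : 2 ≤ n)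
    (U : Set (Matrix (Fin 1) (Fin n) ℝ)) (hU : IsOpen U) (hUne : U.Nonempty)
    (f : ℕ → Matrix (Fin 1) (Fin n) ℝ → Matrix (Fin 1) (Fin n) ℝ)
    (hcont : ∀ k, ContinuousOn (f k) U)
    (hnc : ∀ k, ∀ V ⊆ U, IsOpen V → V.Nonempty → ¬ ∃ c, ∀ A ∈ V, f k A = c) :
    IsGδ {A | A ∈ U ∧ IsLiouvilleMatrix A ∧ ∀ k, LStarRow (f k A)} ∧
    U ⊆ closure {A | A ∈ U ∧ IsLiouvilleMatrix A ∧ ∀ k, LStarRow (f k A)} := by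
  classical
  have hn1 : 1 ≤ n := by omega
  set W := WFam n U f with hW
  -- openness
  have hWo : ∀ i, IsOpen (W i) := by
    rintro (⟨q, p⟩ | N | ⟨k, r⟩ | ⟨k, N⟩)
    · by_cases hqp : q = 0 ∧ p = 0
      · have h : W (.inl (q, p)) = Set.univ := by simp [hW, WFam, hqp]
        rw [h]; exact isOpen_univ
      · have h : W (.inl (q, p)) = {A | A.mulVec (vecR q) ≠ vecR p} := by
          simp [hW, WFam, hqp]
        rw [h]
        exact isOpen_ne_fun (continuous_mulVecR (vecR q)) continuous_const
    · exact approxSet_open n N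
    · have : W (.inr (.inr (.inl (k, r)))) =
          U ∩ f k ⁻¹' ({Matrix.of fun _ j => ((r j : ℝ))}ᶜ) := by
        ext A; simp [hW, WFam]
      rw [this]
      exact (hcont k).isOpen_inter_preimage hU isClosed_singleton.isOpen_compl
    · have : W (.inr (.inr (.inr (k, N)))) = U ∩ f k ⁻¹' (ApproxSet n N) := by
        ext A; rfl
      rw [this]
      exact (hcont k).isOpen_inter_preimage hU (approxSet_open n N)
  -- density
  have hWd : ∀ i, U ⊆ closure (W i) := by
    rintro (⟨q, p⟩ | N | ⟨k, r⟩ | ⟨k, N⟩)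
    · by_cases hqp : q = 0 ∧ p = 0
      · have h : W (.inl (q, p)) = Set.univ := by simp [hW, WFam, hqp]
        rw [h]; simp
      · have h : W (.inl (q, p)) = {A | A.mulVec (vecR q) ≠ vecR p} := by
          simp [hW, WFam, hqp]
        rw [h]
        intro A _; exact hyperplane_compl_dense hqp A
    · intro A _; exact approxSet_dense hn1 N A
    · -- nowhere-constant gives density of {A ∈ U | f k A ≠ c}
      intro A hA
      refine Metric.mem_closure_iff.mpr ?_
      intro ε hε
      obtain ⟨δ, hδ0, hδ⟩ := Metric.isOpen_iff.mp hU A hA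
      set ε' := min ε δ with hε'
      have hε'0 : 0 < ε' := lt_min hε hδ0
      have hball : Metric.ball A ε' ⊆ U := fun x hx =>
        hδ (Metric.ball_subset_ball (min_le_right _ _) hx)
      have hne : ¬ ∃ c, ∀ B ∈ Metric.ball A ε', f k B = c :=
        hnc k _ hball Metric.isOpen_ball ⟨A, Metric.mem_ball_self hε'0⟩
      have : ∃ B ∈ Metric.ball A ε', f k B ≠ Matrix.of fun _ j => ((r j : ℝ)) := by
        by_contra h
        push_neg at h
        exact hne ⟨_, h⟩
      obtain ⟨B, hB, hBne⟩ := this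
      refine ⟨B, ⟨hball hB, hBne⟩, ?_⟩
      rw [dist_comm]
      exact lt_of_lt_of_le hB (min_le_left _ _)
    · -- nowhere-constant + IVT gives density of the deeper approximation sets
      intro A hA
      refine Metric.mem_closure_iff.mpr ?_
      intro ε hε
      obtain ⟨δ, hδ0, hδ⟩ := Metric.isOpen_iff.mp hU A hA
      set ε' := min ε δ with hε'
      have hε'0 : 0 < ε' := lt_min hε hδ0
      set V := Metric.ball A ε' with hV
      have hball : V ⊆ U := fun x hx =>
        hδ (Metric.ball_subset_ball (min_le_right _ _) hx)
      have hAV : A ∈ V := Metric.mem_ball_self hε'0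
      have hne : ¬ ∃ c, ∀ B ∈ V, f k B = c :=
        hnc k _ hball Metric.isOpen_ball ⟨A, hAV⟩
      have : ∃ B ∈ V, f k B ≠ f k A := by
        by_contra h
        push_neg at h
        exact hne ⟨f k A, h⟩
      obtain ⟨B, hBV, hBne⟩ := this
      obtain ⟨j, hj⟩ : ∃ j, f k B 0 j ≠ f k A 0 j := by
        by_contra h
        push_neg at h
        apply hBne
        funext i j
        rw [Subsingleton.elim i 0]
        exact h j
      set g : Matrix (Fin 1) (Fin n) ℝ → ℝ := fun C => f k C 0 j with hg
      have hgc : ContinuousOn g V := by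
        have h0 : Continuous fun M : Matrix (Fin 1) (Fin n) ℝ => M 0 j :=
          continuous_id.matrix_elem 0 j
        exact h0.comp_continuousOn ((hcont k).mono hball)
      have hpre : IsPreconnected V := (convex_ball A ε').isPreconnected
      -- find a point where g takes a value p/M
      have key : ∃ (p : ℤ) (M : ℕ), 0 < M ∧ ∃ C ∈ V, g C = (p : ℝ) / M := by
        rcases lt_or_gt_of_ne hj with hlt | hlt
        · obtain ⟨p, M, hM, hmem⟩ := exists_int_div_mem_Icc hlt
          obtain ⟨C, hC, hgC⟩ := hpre.intermediate_value hBV hAV hgc hmem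
          exact ⟨p, M, hM, C, hC, hgC⟩
        · obtain ⟨p, M, hM, hmem⟩ := exists_int_div_mem_Icc hlt
          obtain ⟨C, hC, hgC⟩ := hpre.intermediate_value hAV hBV hgc hmem
          exact ⟨p, M, hM, C, hC, hgC⟩
      obtain ⟨p, M, hM, C, hCV, hgC⟩ := key
      have hMR : (0 : ℝ) < M := by exact_mod_cast hM
      refine ⟨C, ⟨hball hCV, ?_⟩, ?_⟩
      · refine ⟨fun _ => p, fun j' => if j' = j then (M : ℤ) else 0, ?_, ?_⟩
        · intro h
          have := congrFun h j
          simp at this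
          omega
        · have hz : (f k C).mulVec (vecR fun j' => if j' = j then (M : ℤ) else 0)
              - vecR (fun _ => p) = 0 := by
            funext i
            have h1 := _root_.single_mulVec (f k C) j (M : ℤ) i
            have hi : i = 0 := Subsingleton.elim i 0
            have h2 : f k C i j = (p : ℝ) / M := by rw [hi]; exact hgC
            have h3 : (p : ℝ) / M * M = p := by field_simp
            simp [Pi.sub_apply, h1, h2, vecR, div_mul_cancel₀, h3]
          rw [hz]
          have : (fun j' => if j' = j then (M : ℤ) else 0) ≠ 0 := by
            intro h
            have := congrFun h j
            simp at this
            omega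
          simpa using qpos this N
      · rw [dist_comm]
        exact lt_of_lt_of_le hCV (min_le_left _ _)
  -- set equality
  have hEq : {A | A ∈ U ∧ IsLiouvilleMatrix A ∧ ∀ k, LStarRow (f k A)} = U ∩ ⋂ i, W i := by
    ext A
    simp only [Set.mem_setOf_eq, Set.mem_inter_iff, Set.mem_iInter]
    constructor
    · rintro ⟨hAU, ⟨hL1, hL2⟩, hLS⟩
      refine ⟨hAU, ?_⟩
      rintro (⟨q, p⟩ | N | ⟨k, r⟩ | ⟨k, N⟩)
      · by_cases hqp : q = 0 ∧ p = 0
        · have h : W (.inl (q, p)) = Set.univ := by simp [hW, WFam, hqp]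
          rw [h]; trivial
        · have h : W (.inl (q, p)) = {A | A.mulVec (vecR q) ≠ vecR p} := by
            simp [hW, WFam, hqp]
          rw [h]
          exact hL1 q p hqp
      · exact hL2 N
      · refine ⟨hAU, fun h => (hLS k).1 fun j => ⟨r j, ?_⟩⟩
        rw [h]; rfl
      · exact ⟨hAU, (hLS k).2 N⟩
    · rintro ⟨hAU, h⟩
      refine ⟨hAU, ⟨?_, fun N => h (.inr (.inl N))⟩, fun k => ⟨?_, fun N =>
        (h (.inr (.inr (.inr (k, N))))).2⟩⟩
      · intro q p hqp
        have := h (.inl (q, p))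
        rw [show W (.inl (q, p)) = if q = 0 ∧ p = 0 then Set.univ
            else {A | A.mulVec (vecR q) ≠ vecR p} from rfl, if_neg hqp] at this
        exact this
      · intro hrat
        choose r hr using hrat
        have := (h (.inr (.inr (.inl (k, r))))).2
        apply this
        funext i j
        rw [Subsingleton.elim i 0]
        exact hr j
  rw [hEq]
  haveI : TopologicalSpace.PseudoMetrizableSpace (Matrix (Fin 1) (Fin n) ℝ) :=
    inferInstanceAs (TopologicalSpace.PseudoMetrizableSpace (Fin 1 → Fin n → ℝ))
  haveI : BaireSpace (Matrix (Fin 1) (Fin n) ℝ) :=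
    inferInstanceAs (BaireSpace (Fin 1 → Fin n → ℝ))
  exact baire_helper hU W hWo hWd

end
end

section
/- Let n ≥ 1 and A be a real n×n matrix. If A = B + C where B, C are weakly algebraically independent n×n real matrices, then A is transcendental, i.e., P(A) ≠ 0 for every nonzero polynomial P with integer coefficients. -/
/-!
Substituting `X + Y` into `P` gives a noncommutative polynomial that vanishes at `(B, C)` if
`P(A) = 0`. By weak algebraic independence it then vanishes at `(M, 0)` for every matrix `M`, so
every real `n × n` matrix is a root of `P`. Since `n ≥ 1`, this includes the scalar matrices
`t • 1` for all real `t`, so `P` has infinitely many real roots and is zero.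
-/

/-- Two real `n × n` matrices are weakly algebraically independent if every
noncommutative integer polynomial relation they satisfy is satisfied by all
pairs of real `n × n` matrices. -/
def WeaklyAlgIndep {n : ℕ} (B C : Matrix (Fin n) (Fin n) ℝ) : Prop :=
  ∀ P : FreeAlgebra ℤ (Fin 2), (FreeAlgebra.lift ℤ ![B, C]) P = 0 →
    ∀ C₀ C₁ : Matrix (Fin n) (Fin n) ℝ, (FreeAlgebra.lift ℤ ![C₀, C₁]) P = 0

open Polynomial

theorem Polynomial.eq_zero_of_forall_aeval_eq_zero {R K A : Type*} [CommRing R] [CommRing K]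
    [IsDomain K] [Infinite K] [Ring A] [Nontrivial A] [Algebra R K] [FaithfulSMul R K]
    [Algebra R A] [Algebra K A] [IsScalarTower R K A] [Module.IsTorsionFree K A] {P : R[X]}
    (h : ∀ a : A, aeval a P = 0) : P = 0 := by
  apply map_injective (algebraMap R K) (FaithfulSMul.algebraMap_injective R K)
  refine Polynomial.funext fun t => ?_
  rw [eval_map_algebraMap, Polynomial.map_zero, eval_zero]
  exact (aeval_algebraMap_eq_zero_iff (B := A) t P).mp (h _)

theorem FreeAlgebra.lift_aeval_add {R A : Type*} [CommSemiring R] [Semiring A] [Algebra R A]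
    (P : R[X]) (x y : A) :
    lift R ![x, y] (aeval (ι R 0 + ι R 1) P) = aeval (x + y) P := by
  rw [← aeval_algHom_apply]
  simp

theorem transcendental_of_weaklyAlgIndep_sum (n : ℕ) (hn : 1 ≤ n)
    (A B C : Matrix (Fin n) (Fin n) ℝ) (hsum : A = B + C)
    (hind : WeaklyAlgIndep B C) :
    ∀ P : Polynomial ℤ, P ≠ 0 → Polynomial.aeval A P ≠ 0 := by
  intro P hP hPA
  have : NeZero n := ⟨by omega⟩
  have hBC :
      FreeAlgebra.lift ℤ ![B, C] (aeval (FreeAlgebra.ι ℤ 0 + FreeAlgebra.ι ℤ 1) P) = 0 := by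
    rw [FreeAlgebra.lift_aeval_add, ← hsum, hPA]
  refine hP (eq_zero_of_forall_aeval_eq_zero (K := ℝ) fun M : Matrix (Fin n) (Fin n) ℝ => ?_)
  simpa [FreeAlgebra.lift_aeval_add] using hind _ hBC M 0
end
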